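/- Let C be a small category with a Grothendieck topology J and let X = Sheaf J (Type u) be the associated Grothendieck topos. Then for every object Y of X and every sieve S on Y, S is a covering sieve for the canonical topology on X (Mathlib's canonicalTopology, the finest Grothendieck topology for which every representable presheaf is a sheaf) if and only if S is effectively epimorphic. -/

import Mathlib

/-!
Representables are sheaves for the canonical topology, so its covering sieves are effective
epimorphic. Conversely, let `S.range ⊆ Y` be the union of the images of the members of `S`.
If `S` is effective epimorphic, all members of `S` factor through the subsheaf
`S.range.sheafify J ↪ Y`, which therefore has a section, so every section of `Y` is locally in
`S.range`. This local surjectivity passes to every pullback of `S`, because pullbacks of sheaves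
are computed sectionwise. Finally, for a locally surjective sieve a compatible family with values
in a sheaf `W` is the same as a morphism `S.range ⟶ W`, and such morphisms extend uniquely along
the locally bijective inclusion `S.range ⟶ Y`: every pullback of `S` is effective epimorphic.
-/

open CategoryTheory Limits

universe w v u

namespace CategoryTheory

lemma Sieve.EffectiveEpimorphic.isIso_of_le_generateSingleton {𝒞 : Type*} [Category 𝒞]
    {Y T : 𝒞} {S : Sieve Y} (hS : S.EffectiveEpimorphic) (m : T ⟶ Y) [Mono m]
    (hm : S ≤ Sieve.generateSingleton m) : IsIso m := by
  rw [Sieve.EffectiveEpimorphic.iff_forall_isSheafFor_yoneda] at hS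
  choose lift hlift using hm
  have hx : (show Presieve.FamilyOfElements (yoneda.obj T) S.arrows from lift).Compatible := by
    intro Z₁ Z₂ W g₁ g₂ f₁ f₂ h₁ h₂ w
    rw [← cancel_mono m]
    simpa [hlift] using w
  obtain ⟨r, hr, -⟩ := hS T _ hx
  have hrm : r ≫ m = 𝟙 Y := (hS Y).isSeparatedFor.ext fun Z f hf => by
    simpa [← hr f hf, hlift] using hlift f hf
  exact ⟨r, by simp [← cancel_mono m, hrm], hrm⟩

variable {C : Type u} [Category.{v} C] {J : GrothendieckTopology C}

lemma Sheaf.exists_pullback_section {Z₁ Z₂ Y : Sheaf J (Type w)} (f₁ : Z₁ ⟶ Y) (f₂ : Z₂ ⟶ Y)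
    {c : Cᵒᵖ} (t₁ : Z₁.obj.obj c) (t₂ : Z₂.obj.obj c) (h : f₁.hom.app c t₁ = f₂.hom.app c t₂) :
    ∃ p : (pullback f₁ f₂).obj.obj c,
      (pullback.fst f₁ f₂).hom.app c p = t₁ ∧ (pullback.snd f₁ f₂).hom.app c p = t₂ := by
  have hc := isLimitPullbackConeMapOfIsLimit (sheafToPresheaf J _ ⋙ (evaluation _ _).obj c)
    pullback.condition (pullbackIsPullback f₁ f₂)
  exact ⟨(PullbackCone.IsLimit.equivPullbackObj hc).symm ⟨⟨t₁, t₂⟩, h⟩,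
    PullbackCone.IsLimit.equivPullbackObj_symm_apply_fst hc _,
    PullbackCone.IsLimit.equivPullbackObj_symm_apply_snd hc _⟩

namespace Sieve

variable {Y : Sheaf J (Type w)}

def range (S : Sieve Y) : Subfunctor Y.obj :=
  ⨆ (Z : Sheaf J (Type w)) (f : Z ⟶ Y) (_ : S f), Subfunctor.range f.hom

lemma mem_range_obj {S : Sieve Y} {c : Cᵒᵖ} {y : Y.obj.obj c} :
    y ∈ S.range.obj c ↔ ∃ (Z : Sheaf J (Type w)) (f : Z ⟶ Y) (_ : S f) (t : Z.obj.obj c),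
      f.hom.app c t = y := by
  simp [range, Subfunctor.iSup_obj]

lemma range_sheafify_eq_top_of_effectiveEpimorphic {S : Sieve Y} (hS : S.EffectiveEpimorphic) :
    S.range.sheafify J = ⊤ := by
  let T : Sheaf J (Type w) := ⟨_, (isSheaf_iff_isSheaf_of_type J _).2
    (S.range.sheafify_isSheaf ((isSheaf_iff_isSheaf_of_type J _).1 Y.property))⟩
  let m : T ⟶ Y := ObjectProperty.homMk (S.range.sheafify J).ι
  have : Mono m := (sheafToPresheaf J _).mono_of_mono_map (inferInstanceAs (Mono (Subfunctor.ι _)))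
  have hm : S ≤ generateSingleton m := fun Z f hf =>
    ⟨ObjectProperty.homMk (Subfunctor.lift f.hom fun c y hy => S.range.le_sheafify J c
      (mem_range_obj.2 (by obtain ⟨t, rfl⟩ := hy; exact ⟨Z, f, hf, t, rfl⟩))), rfl⟩
  have := hS.isIso_of_le_generateSingleton m hm
  exact (Subfunctor.eq_top_iff_isIso _).2 (inferInstanceAs (IsIso ((sheafToPresheaf J _).map m)))

lemma range_pullback_sheafify_eq_top {S : Sieve Y} (hS : S.range.sheafify J = ⊤)
    {Z : Sheaf J (Type w)} (g : Z ⟶ Y) : (S.pullback g).range.sheafify J = ⊤ := by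
  refine eq_top_iff.2 fun c z _ => ?_
  have hgz : g.hom.app c z ∈ (S.range.sheafify J).obj c := hS ▸ trivial
  refine J.superset_covering (fun d h hh => ?_) hgz
  obtain ⟨Z', f, hf, t, ht⟩ := mem_range_obj.1 hh
  obtain ⟨p, -, hp⟩ := Sheaf.exists_pullback_section f g t (Z.obj.map h.op z)
    (by rw [ht, NatTrans.naturality_apply])
  refine mem_range_obj.2 ⟨_, pullback.snd f g, ?_, p, hp⟩
  simpa [← pullback.condition] using S.downward_closed hf (pullback.fst f g)

end Sieve

section

variable {Y W : Sheaf J (Type w)} {S : Sieve Y}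
  {x : Presieve.FamilyOfElements (yoneda.obj W) S.arrows}

lemma Presieve.FamilyOfElements.Compatible.hom_app_eq (hx : x.Compatible)
    {Z₁ Z₂ : Sheaf J (Type w)} {f₁ : Z₁ ⟶ Y} {f₂ : Z₂ ⟶ Y} (hf₁ : S f₁) (hf₂ : S f₂) {c : Cᵒᵖ}
    {t₁ : Z₁.obj.obj c} {t₂ : Z₂.obj.obj c} (h : f₁.hom.app c t₁ = f₂.hom.app c t₂) :
    (x f₁ hf₁).hom.app c t₁ = (x f₂ hf₂).hom.app c t₂ := by
  obtain ⟨p, rfl, rfl⟩ := Sheaf.exists_pullback_section f₁ f₂ t₁ t₂ h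
  simpa using congr_arg (fun g => g.hom.app c p)
    (hx (pullback.fst f₁ f₂) (pullback.snd f₁ f₂) hf₁ hf₂ pullback.condition)

namespace Sieve

-- Sends `f t` to `x f t`; the choice of `f` and `t` is irrelevant by `Compatible.hom_app_eq`.
noncomputable def rangeDesc (hx : x.Compatible) : S.range.toFunctor ⟶ W.obj where
  app c := TypeCat.ofHom fun y =>
    let h := (mem_range_obj.1 y.2).choose_spec.choose_spec
    (x _ h.choose).hom.app c h.choose_spec.choose
  naturality c c' g := by
    ext y
    have h := (mem_range_obj.1 y.2).choose_spec.choose_spec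
    have h' := (mem_range_obj.1 (S.range.toFunctor.map g y).2).choose_spec.choose_spec
    dsimp
    rw [← NatTrans.naturality_apply]
    refine hx.hom_app_eq _ _ (h'.choose_spec.choose_spec.trans ?_)
    rw [NatTrans.naturality_apply, h.choose_spec.choose_spec]
    rfl

lemma rangeDesc_app (hx : x.Compatible) {c : Cᵒᵖ} (y : S.range.toFunctor.obj c)
    {Z : Sheaf J (Type w)} {f : Z ⟶ Y} (hf : S f) (t : Z.obj.obj c) (ht : f.hom.app c t = y.1) :
    (rangeDesc hx).app c y = (x f hf).hom.app c t :=
  hx.hom_app_eq _ _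
    ((mem_range_obj.1 y.2).choose_spec.choose_spec.choose_spec.choose_spec.trans ht.symm)

lemma isAmalgamation_iff_range_ι_comp (hx : x.Compatible) (r : Y ⟶ W) :
    x.IsAmalgamation r ↔ S.range.ι ≫ r.hom = rangeDesc hx := by
  constructor
  · intro hr
    ext c y
    change r.hom.app c y.1 = (rangeDesc hx).app c y
    obtain ⟨Z, f, hf, t, ht⟩ := mem_range_obj.1 y.2
    rw [rangeDesc_app hx y hf t ht, ← hr f hf, ← ht]
    rfl
  · intro hr Z f hf
    apply Sheaf.hom_ext
    ext c t
    let y : S.range.toFunctor.obj c := ⟨f.hom.app c t, mem_range_obj.2 ⟨Z, f, hf, t, rfl⟩⟩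
    exact (congr_arg (fun φ => φ.app c y) hr).trans (rangeDesc_app hx y hf t rfl)

variable (W) in
lemma isSheafFor_yoneda_of_range_sheafify_eq_top [J.WEqualsLocallyBijective (Type w)]
    (hS : S.range.sheafify J = ⊤) : Presieve.IsSheafFor (yoneda.obj W) S.arrows := by
  have : Presheaf.IsLocallySurjective J S.range.ι := by
    rwa [Presheaf.isLocallySurjective_iff_range_sheafify_eq_top', Subfunctor.range_ι]
  have hι := J.W_of_isLocallyBijective S.range.ι W.obj W.property
  intro x hx
  obtain ⟨d, hd⟩ := hι.2 (rangeDesc hx)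
  refine ⟨ObjectProperty.homMk d, (isAmalgamation_iff_range_ι_comp hx _).2 hd, fun r hr => ?_⟩
  exact Sheaf.hom_ext (hι.1 (((isAmalgamation_iff_range_ι_comp hx r).1 hr).trans hd.symm))

end Sieve

end

end CategoryTheory

theorem statement7 {C : Type u} [SmallCategory C] (J : GrothendieckTopology C)
    (Y : Sheaf J (Type u)) (S : Sieve Y) :
    S ∈ Sheaf.canonicalTopology (Sheaf J (Type u)) Y ↔ S.EffectiveEpimorphic := by
  refine ⟨fun hS => ?_, fun hS => ?_⟩
  · rw [Sieve.EffectiveEpimorphic.iff_forall_isSheafFor_yoneda]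
    exact fun W => Sheaf.isSheaf_yoneda_obj W S hS
  · have hloc := Sieve.range_sheafify_eq_top_of_effectiveEpimorphic hS
    refine Sheaf.mem_finestTopology_of_forall_isSheafFor ?_
    rintro _ ⟨W, rfl⟩ Z f
    exact Sieve.isSheafFor_yoneda_of_range_sheafify_eq_top W
      (Sieve.range_pullback_sheafify_eq_top hloc f)
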